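/- Let α ∈ (0,1) and n ∈ ℕ*. The symmetric n×n matrix A_n with entries A_n(i,j) = ψ(i,j) for i,j ∈ {1,…,n}, where ψ(i,j) = Γ(i+1)/Γ(i+1−α) + Γ(j+1)/Γ(j+1−α) − Γ(i+j+1)/Γ(i+j+1−α), is positive definite. -/

import Mathlib

/-! The sequence `f m = Γ(m+1)/Γ(m+1-α)` satisfies `ψ(i,j) = f i + f j - f (i+j)`, and its
increments are Beta integrals: `f (k+1) - f k = α/Γ(1-α) ∫₀¹ xᵏ (1-x)^(-α) dx`. Summing them and
using `gᵢ + gⱼ - gᵢ₊ⱼ = (1-x) gᵢ gⱼ` for the geometric sums `gₘ = ∑_{k<m} xᵏ` gives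
`ψ(i,j) = 1/Γ(1-α) + α/Γ(1-α) ∫₀¹ gᵢ gⱼ (1-x)^(1-α) dx`. Hence `A_n` is a nonnegative multiple of
the all-ones matrix plus a positive multiple of the Gram matrix of the linearly independent
polynomials `g₁, …, gₙ` for a weight that is positive on `(0,1)`. -/

noncomputable def psi (α : ℝ) (i j : ℕ) : ℝ :=
  Real.Gamma ((i : ℝ) + 1) / Real.Gamma ((i : ℝ) + 1 - α)
    + Real.Gamma ((j : ℝ) + 1) / Real.Gamma ((j : ℝ) + 1 - α)
    - Real.Gamma ((i : ℝ) + (j : ℝ) + 1) / Real.Gamma ((i : ℝ) + (j : ℝ) + 1 - α)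

open Set Finset Polynomial MeasureTheory intervalIntegral Filter Matrix

lemma intervalIntegrable_one_sub_rpow {r : ℝ} (hr : -1 < r) :
    IntervalIntegrable (fun x : ℝ => (1 - x) ^ r) volume 0 1 := by
  simpa using ((intervalIntegrable_rpow' (a := 0) (b := 1) hr).comp_sub_left 1).symm

lemma integral_pow_mul_one_sub_rpow {s : ℝ} (hs : 0 < s) (k : ℕ) :
    ∫ x in (0:ℝ)..1, x ^ k * (1 - x) ^ (s - 1)
      = Real.Gamma (k + 1) * Real.Gamma s / Real.Gamma (k + 1 + s) := by
  have hB := Complex.Gamma_mul_Gamma_eq_betaIntegral (s := ((k + 1 : ℝ) : ℂ)) (t := (s : ℂ))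
    (by simp; positivity) (by simpa using hs)
  have hint : Complex.betaIntegral ((k + 1 : ℝ) : ℂ) s
      = ((∫ x in (0:ℝ)..1, x ^ k * (1 - x) ^ (s - 1) : ℝ) : ℂ) := by
    rw [Complex.betaIntegral, ← intervalIntegral.integral_ofReal]
    refine intervalIntegral.integral_congr fun x hx => ?_
    rw [Set.uIcc_of_le zero_le_one] at hx
    have hk : ((k + 1 : ℝ) : ℂ) - 1 = k := by push_cast; ring
    rw [hk, Complex.cpow_natCast, ← Complex.ofReal_one, ← Complex.ofReal_sub,
      ← Complex.ofReal_sub, ← Complex.ofReal_cpow (by linarith [hx.2])]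
    push_cast; ring
  rw [hint, ← Complex.ofReal_add, Complex.Gamma_ofReal, Complex.Gamma_ofReal,
    Complex.Gamma_ofReal, ← Complex.ofReal_mul, ← Complex.ofReal_mul] at hB
  have hΓ : 0 < Real.Gamma (k + 1 + s) := Real.Gamma_pos_of_pos (by positivity)
  rw [eq_div_iff hΓ.ne', Complex.ofReal_injective hB, mul_comm]

lemma Polynomial.degree_geom_sum_X {R : Type*} [Semiring R] [Nontrivial R] (n : ℕ) :
    (∑ k ∈ range (n + 1), (X : R[X]) ^ k).degree = n := by
  rw [geom_sum_succ', degree_add_eq_left_of_degree_lt] <;> simp only [degree_X_pow]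
  rw [← mem_degreeLT]
  exact Submodule.sum_mem _ fun k hk => by
    rw [mem_degreeLT, degree_X_pow]; exact_mod_cast mem_range.mp hk

lemma geom_sum_add_geom_sum_sub_geom_sum {R : Type*} [CommRing R] (x : R) (i j : ℕ) :
    ∑ k ∈ range i, x ^ k + ∑ k ∈ range j, x ^ k - ∑ k ∈ range (i + j), x ^ k
      = (∑ k ∈ range i, x ^ k) * (∑ k ∈ range j, x ^ k) * (1 - x) := by
  simp only [sum_range_add, pow_add, ← mul_sum]
  linear_combination -(∑ k ∈ range j, x ^ k) * geom_sum_mul_neg x i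

lemma integral_sq_eval_mul_pos {p : ℝ[X]} (hp : p ≠ 0) {w : ℝ → ℝ} {a b : ℝ} (hab : a < b)
    (hw : IntervalIntegrable w volume a b) (hw_pos : ∀ x ∈ Ioo a b, 0 < w x) :
    0 < ∫ x in a..b, p.eval x ^ 2 * w x := by
  have hint : IntervalIntegrable (fun x => p.eval x ^ 2 * w x) volume a b :=
    hw.continuousOn_mul (p.continuous.pow 2).continuousOn
  have hnonneg : 0 ≤ᵐ[volume.restrict (uIoc a b)] fun x => p.eval x ^ 2 * w x := by
    rw [EventuallyLE, uIoc_of_le hab.le]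
    refine ae_restrict_of_ae_eq_of_ae_restrict Ioo_ae_eq_Ioc ?_
    rw [ae_restrict_iff' measurableSet_Ioo]
    filter_upwards with x hx using mul_nonneg (sq_nonneg _) (hw_pos x hx).le
  have hsupp : Ioo a b \ {x | p.IsRoot x}
      ⊆ Function.support (fun x => p.eval x ^ 2 * w x) ∩ Ioc a b := fun x ⟨hx, hroot⟩ =>
    ⟨(mul_pos (pow_two_pos_of_ne_zero hroot) (hw_pos x hx)).ne', Ioo_subset_Ioc_self hx⟩
  rw [integral_pos_iff_support_of_nonneg_ae' hnonneg hint]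
  refine ⟨hab, ?_⟩
  calc 0 < volume (Ioo a b) := (Measure.measure_Ioo_pos _).mpr hab
    _ = volume (Ioo a b \ {x | p.IsRoot x}) :=
        (measure_sdiff_null ((p.finite_setOfPred_isRoot hp).measure_zero _)).symm
    _ ≤ _ := measure_mono hsupp

lemma dotProduct_mulVec_integral_gram {ι : Type*} [Fintype ι] (g : ι → ℝ[X]) {w : ℝ → ℝ}
    {a b : ℝ} (hw : IntervalIntegrable w volume a b) (v : ι → ℝ) :
    v ⬝ᵥ (Matrix.of fun i j => ∫ x in a..b, (g i).eval x * (g j).eval x * w x) *ᵥ v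
      = ∫ x in a..b, (∑ i, v i • g i).eval x ^ 2 * w x := by
  have hint : ∀ i j, IntervalIntegrable
      (fun x => v i * v j * ((g i).eval x * (g j).eval x * w x)) volume a b := fun i j =>
    (hw.continuousOn_mul ((g i).continuous.mul (g j).continuous).continuousOn).const_mul _
  calc v ⬝ᵥ (Matrix.of fun i j => ∫ x in a..b, (g i).eval x * (g j).eval x * w x) *ᵥ v
      = ∑ i, ∑ j, ∫ x in a..b, v i * v j * ((g i).eval x * (g j).eval x * w x) := by
        simp only [dotProduct, mulVec, of_apply, mul_sum, intervalIntegral.integral_const_mul]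
        refine sum_congr rfl fun i _ => sum_congr rfl fun j _ => by ring
    _ = ∫ x in a..b, ∑ i, ∑ j, v i * v j * ((g i).eval x * (g j).eval x * w x) := by
        rw [intervalIntegral.integral_finsetSum fun i _ => by
          simpa only [Finset.sum_fn] using IntervalIntegrable.sum univ fun j _ => hint i j]
        simp only [intervalIntegral.integral_finsetSum fun j _ => hint _ j]
    _ = ∫ x in a..b, (∑ i, v i • g i).eval x ^ 2 * w x := by
        simp only [eval_finsetSum, eval_smul, smul_eq_mul, sq, sum_mul, mul_sum]
        exact integral_congr fun x _ => sum_congr rfl fun i _ => sum_congr rfl fun j _ => by ring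

lemma posDef_integral_gram {ι : Type*} [Fintype ι] {g : ι → ℝ[X]} (hg : LinearIndependent ℝ g)
    {w : ℝ → ℝ} {a b : ℝ} (hab : a < b) (hw : IntervalIntegrable w volume a b)
    (hw_pos : ∀ x ∈ Ioo a b, 0 < w x) :
    (Matrix.of fun i j => ∫ x in a..b, (g i).eval x * (g j).eval x * w x).PosDef := by
  rw [posDef_iff_dotProduct_mulVec]
  refine ⟨?_, fun v hv => ?_⟩
  · ext i j
    simp only [conjTranspose_apply, of_apply, star_trivial, mul_comm ((g i).eval _)]
  · rw [star_trivial, dotProduct_mulVec_integral_gram g hw v]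
    refine integral_sq_eval_mul_pos (fun h => hv ?_) hab hw hw_pos
    exact funext (Fintype.linearIndependent_iff.mp hg v h)

noncomputable def gammaRatio (α : ℝ) (m : ℕ) : ℝ := Real.Gamma (m + 1) / Real.Gamma (m + 1 - α)

lemma psi_eq_gammaRatio (α : ℝ) (i j : ℕ) :
    psi α i j = gammaRatio α i + gammaRatio α j - gammaRatio α (i + j) := by
  simp only [psi, gammaRatio, Nat.cast_add]

lemma gammaRatio_zero (α : ℝ) : gammaRatio α 0 = 1 / Real.Gamma (1 - α) := by
  simp [gammaRatio]

section gammaRatio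

variable {α : ℝ}

lemma gammaRatio_succ_sub_gammaRatio (hα : α < 1) (k : ℕ) :
    gammaRatio α (k + 1) - gammaRatio α k
      = α / Real.Gamma (1 - α) * ∫ x in (0:ℝ)..1, x ^ k * (1 - x) ^ (-α) := by
  have hk : 0 < (k : ℝ) + 1 - α := by linarith [k.cast_nonneg (α := ℝ)]
  have hβ := integral_pow_mul_one_sub_rpow (sub_pos.mpr hα) k
  rw [sub_sub_cancel_left] at hβ
  rw [hβ, gammaRatio, gammaRatio, show (k : ℝ) + 1 + (1 - α) = (k + 1 - α) + 1 by ring,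
    Real.Gamma_add_one hk.ne', Nat.cast_succ, show (k : ℝ) + 1 + 1 - α = (k + 1 - α) + 1 by ring,
    Real.Gamma_add_one hk.ne', Real.Gamma_add_one (by positivity)]
  have hΓk := Real.Gamma_pos_of_pos hk
  have hΓ := Real.Gamma_pos_of_pos (sub_pos.mpr hα)
  field_simp
  ring

lemma gammaRatio_sub_gammaRatio_zero (hα : α < 1) (m : ℕ) :
    gammaRatio α m - gammaRatio α 0
      = α / Real.Gamma (1 - α) * ∫ x in (0:ℝ)..1, (∑ k ∈ range m, x ^ k) * (1 - x) ^ (-α) := by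
  have hint : ∀ k, IntervalIntegrable (fun x : ℝ => x ^ k * (1 - x) ^ (-α)) volume 0 1 := fun k =>
    (intervalIntegrable_one_sub_rpow (by linarith)).continuousOn_mul (continuous_pow k).continuousOn
  simp only [← sum_range_sub, gammaRatio_succ_sub_gammaRatio hα, ← mul_sum, sum_mul,
    ← intervalIntegral.integral_finsetSum fun k _ => hint k]

lemma psi_eq_integral (hα : α < 1) (i j : ℕ) :
    psi α i j = 1 / Real.Gamma (1 - α) + α / Real.Gamma (1 - α) *
      ∫ x in (0:ℝ)..1, (∑ k ∈ range i, x ^ k) * (∑ k ∈ range j, x ^ k) * (1 - x) ^ (1 - α) := by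
  have hint : ∀ m, IntervalIntegrable (fun x : ℝ => (∑ k ∈ range m, x ^ k) * (1 - x) ^ (-α))
      volume 0 1 := fun m =>
    (intervalIntegrable_one_sub_rpow (by linarith)).continuousOn_mul (by fun_prop)
  have hpsi : psi α i j = gammaRatio α 0 + (gammaRatio α i - gammaRatio α 0)
      + (gammaRatio α j - gammaRatio α 0) - (gammaRatio α (i + j) - gammaRatio α 0) := by
    rw [psi_eq_gammaRatio]; ring
  have hgeom : ∫ x in (0:ℝ)..1, (∑ k ∈ range i, x ^ k) * (∑ k ∈ range j, x ^ k) * (1 - x) ^ (1 - α)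
      = (∫ x in (0:ℝ)..1, (∑ k ∈ range i, x ^ k) * (1 - x) ^ (-α))
        + (∫ x in (0:ℝ)..1, (∑ k ∈ range j, x ^ k) * (1 - x) ^ (-α))
        - ∫ x in (0:ℝ)..1, (∑ k ∈ range (i + j), x ^ k) * (1 - x) ^ (-α) := by
    rw [← intervalIntegral.integral_add (hint i) (hint j),
      ← intervalIntegral.integral_sub ((hint i).add (hint j)) (hint (i + j))]
    refine integral_congr fun x hx => ?_
    rw [Set.uIcc_of_le zero_le_one] at hx
    rw [← add_mul, ← sub_mul, geom_sum_add_geom_sum_sub_geom_sum, sub_eq_add_neg (1 : ℝ) α,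
      Real.rpow_one_add' (by linarith [hx.2]) (by linarith)]
    ring
  rw [hpsi, gammaRatio_sub_gammaRatio_zero hα, gammaRatio_sub_gammaRatio_zero hα,
    gammaRatio_sub_gammaRatio_zero hα, gammaRatio_zero, hgeom]
  ring

end gammaRatio

theorem psi_matrix_posDef_general (α : ℝ) (hα : α ∈ Set.Ioo (0:ℝ) 1) (n : ℕ) :
    (Matrix.of fun i j : Fin n => psi α ((i : ℕ) + 1) ((j : ℕ) + 1)).PosDef := by
  obtain ⟨hα0, hα1⟩ := hα
  have hΓ : 0 < Real.Gamma (1 - α) := Real.Gamma_pos_of_pos (sub_pos.mpr hα1)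
  let g : Fin n → ℝ[X] := fun i => ∑ k ∈ range ((i : ℕ) + 1), X ^ k
  have hg : LinearIndependent ℝ g :=
    (⟨fun m => ∑ k ∈ range (m + 1), X ^ k, degree_geom_sum_X⟩ : Sequence ℝ).linearIndependent.comp
      _ Fin.val_injective
  have hsplit : (Matrix.of fun i j : Fin n => psi α ((i : ℕ) + 1) ((j : ℕ) + 1))
      = (1 / Real.Gamma (1 - α)) • vecMulVec 1 (star 1)
        + (α / Real.Gamma (1 - α)) • Matrix.of fun i j =>
          ∫ x in (0:ℝ)..1, (g i).eval x * (g j).eval x * (1 - x) ^ (1 - α) := by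
    ext i j
    simp [psi_eq_integral hα1, g, eval_finsetSum]
  rw [hsplit]
  refine PosDef.posSemidef_add ((posSemidef_vecMulVec_self_star 1).smul (by positivity))
    ((posDef_integral_gram hg zero_lt_one (intervalIntegrable_one_sub_rpow (by linarith))
      fun x hx => Real.rpow_pos_of_pos (sub_pos.mpr hx.2) _).smul (by positivity))

/-- The n×n matrix with entries ψ(i,j), i,j ∈ {1,…,n}, is positive definite. -/
theorem psi_matrix_posDef (α : ℝ) (hα : α ∈ Set.Ioo (0:ℝ) 1) (n : ℕ) (hn : 1 ≤ n) :
    (Matrix.of fun i j : Fin n => psi α ((i : ℕ) + 1) ((j : ℕ) + 1)).PosDef :=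
  psi_matrix_posDef_general α hα n
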